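/- Let n ≥ 3 be odd and let t = (n+1)/2 + s with 1 ≤ s ≤ (n−1)/2. Then the t-graph Γ(2,n,t) of the dihedral group D_n has exactly 4s connected components. -/

import Mathlib

/-- The `t`-graph `Γ(m,n,t)`: vertices are `Fin m × Fin n` (the vertex `(i,j)` encoding
`a^i b^j`), and two distinct vertices `(i,j)`, `(k,l)` are adjacent iff
`|i - k| + |j - l| = t` (comparing coordinates as integers). -/
def tGraph (m n t : ℕ) : SimpleGraph (Fin m × Fin n) where
  Adj x y := x ≠ y ∧ |(x.1 : ℤ) - (y.1 : ℤ)| + |(x.2 : ℤ) - (y.2 : ℤ)| = t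
  symm := by
    refine ⟨?_⟩
    rintro x y ⟨h1, h2⟩
    exact ⟨h1.symm, by rw [abs_sub_comm ((y.1 : ℤ)), abs_sub_comm ((y.2 : ℤ))]; exact h2⟩
  loopless := ⟨fun x ⟨h, _⟩ => h rfl⟩

instance (m n t : ℕ) : DecidableRel (tGraph m n t).Adj := fun x y =>
  inferInstanceAs (Decidable (x ≠ y ∧ |(x.1 : ℤ) - (y.1 : ℤ)| + |(x.2 : ℤ) - (y.2 : ℤ)| = t))

/-!
Write `n = 2k + 2s + 1`, so `t = k + 2s + 1`. Two vertices in the same row are adjacent iff their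
columns differ by `t`, two in different rows iff their columns differ by `t - 1 = k + 2s`. Hence
the `2(2s - 1)` vertices in the columns strictly between `k` and `k + 2s` are isolated, and the
remaining ones form two paths
`(e, k) — (1 - e, 2k + 2s) — (1 - e, k - 1) — (e, 2k + 2s - 1) — (e, k - 2) — ⋯`, `e ∈ {0, 1}`,
told apart by a parity invariant: `2(2s - 1) + 2 = 4s` components in all.
-/

theorem tGraph_two_adj_iff (n t : ℕ) (x y : Fin 2 × Fin n) :
    (tGraph 2 n (t + 1)).Adj x y ↔
      (x.1 = y.1 ∧ ((x.2 : ℕ) + (t + 1) = y.2 ∨ (y.2 : ℕ) + (t + 1) = x.2)) ∨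
      (x.1 ≠ y.1 ∧ ((x.2 : ℕ) + t = y.2 ∨ (y.2 : ℕ) + t = x.2)) := by
  obtain ⟨⟨i, hi⟩, ⟨j, hj⟩⟩ := x
  obtain ⟨⟨i', hi'⟩, ⟨j', hj'⟩⟩ := y
  simp only [tGraph, ne_eq, Prod.mk.injEq, Fin.mk.injEq, abs_eq_max_neg]
  omega

namespace SimpleGraph

variable {V α : Type*} {G : SimpleGraph V}

theorem Reachable.eq_of_forall_adj {f : V → α} (hf : ∀ x y, G.Adj x y → f x = f y) {x y : V}
    (h : G.Reachable x y) : f x = f y := by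
  obtain ⟨w⟩ := h
  induction w with
  | nil => rfl
  | cons hxy _ ih => exact (hf _ _ hxy).trans ih

theorem exists_reachable_of_forall_exists_adj_lt {P : V → Prop} (d : V → ℕ)
    (hd : ∀ x, ¬P x → ∃ y, G.Adj x y ∧ d y < d x) (x : V) : ∃ y, P y ∧ G.Reachable x y := by
  induction x using (measure d).wf.induction with
  | _ x ih =>
    by_cases hx : P x
    · exact ⟨x, hx, .refl x⟩
    · obtain ⟨y, hxy, hlt⟩ := hd x hx
      obtain ⟨z, hz, hyz⟩ := ih y hlt
      exact ⟨z, hz, hxy.reachable.trans hyz⟩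

def ConnectedComponent.equivOfSection (f : V → α) (hf : ∀ x y, G.Adj x y → f x = f y)
    (r : α → V) (hfr : ∀ a, f (r a) = a) (hr : ∀ x, G.Reachable x (r (f x))) :
    G.ConnectedComponent ≃ α where
  toFun := ConnectedComponent.lift f fun _ _ p _ => p.reachable.eq_of_forall_adj hf
  invFun a := G.connectedComponentMk (r a)
  left_inv := ConnectedComponent.ind fun x => ConnectedComponent.sound (hr x).symm
  right_inv := hfr

end SimpleGraph

namespace tGraph

variable (k s : ℕ)

local notation "Γ" => tGraph 2 (2 * k + 2 * s + 1) (k + 2 * s + 1)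

/-- Isolated vertices are labelled by themselves, the vertices on the two paths by their path. -/
def componentLabel (x : Fin 2 × Fin (2 * k + 2 * s + 1)) : Fin 2 × Fin (2 * s - 1) ⊕ Fin 2 :=
  if _ : (x.2 : ℕ) ≤ k then .inr ⟨((x.1 : ℕ) + (k - (x.2 : ℕ))) % 2, Nat.mod_lt _ two_pos⟩
  else if _ : (x.2 : ℕ) < k + 2 * s then .inl (x.1, ⟨(x.2 : ℕ) - k - 1, by omega⟩)
  else .inr ⟨((x.1 : ℕ) + (2 * k + 2 * s + 1 - (x.2 : ℕ))) % 2, Nat.mod_lt _ two_pos⟩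

def componentRoot : Fin 2 × Fin (2 * s - 1) ⊕ Fin 2 → Fin 2 × Fin (2 * k + 2 * s + 1)
  | .inl (i, c) => (i, ⟨k + 1 + c, by omega⟩)
  | .inr e => (e, ⟨k, by omega⟩)

/-- The distance from `x` to column `k` along its path. -/
def rootDist (x : Fin 2 × Fin (2 * k + 2 * s + 1)) : ℕ :=
  if (x.2 : ℕ) ≤ k then 2 * (k - (x.2 : ℕ)) else 2 * (2 * k + 2 * s - x.2) + 1

theorem componentLabel_componentRoot (a : Fin 2 × Fin (2 * s - 1) ⊕ Fin 2) :
    componentLabel k s (componentRoot k s a) = a := by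
  rcases a with ⟨i, c⟩ | e
  · have h₁ : ¬k + 1 + (c : ℕ) ≤ k := by omega
    have h₂ : k + 1 + (c : ℕ) < k + 2 * s := by omega
    simp only [componentLabel, componentRoot, h₁, h₂, ↓reduceDIte, Sum.inl.injEq, Prod.mk.injEq,
      Fin.ext_iff, true_and]
    omega
  · simp only [componentLabel, componentRoot, le_refl, ↓reduceDIte, tsub_self, add_zero,
      Sum.inr.injEq, Fin.ext_iff]
    omega

theorem componentLabel_eq_of_adj (hs : 0 < s) {x y : Fin 2 × Fin (2 * k + 2 * s + 1)}
    (h : (Γ).Adj x y) :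
    componentLabel k s x = componentLabel k s y := by
  rw [tGraph_two_adj_iff] at h
  obtain ⟨⟨i, hi⟩, ⟨j, hj⟩⟩ := x
  obtain ⟨⟨i', hi'⟩, ⟨j', hj'⟩⟩ := y
  simp only [componentLabel, Fin.mk.injEq, ne_eq] at h ⊢
  split_ifs <;> (try simp only [Sum.inl.injEq, Sum.inr.injEq, Prod.mk.injEq, Fin.mk.injEq]) <;>
    omega

theorem exists_adj_rootDist_lt (hs : 0 < s) (x : Fin 2 × Fin (2 * k + 2 * s + 1))
    (hx : x ≠ componentRoot k s (componentLabel k s x)) :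
    ∃ y, (Γ).Adj x y ∧ rootDist k s y < rootDist k s x := by
  obtain ⟨⟨i, hi⟩, ⟨j, hj⟩⟩ := x
  by_cases hlow : j < k
  · refine ⟨(⟨i, hi⟩, ⟨j + (k + 2 * s + 1), by omega⟩), ?_, ?_⟩
    · exact (tGraph_two_adj_iff ..).2 (.inl ⟨rfl, .inl rfl⟩)
    · simp only [rootDist]; split_ifs <;> omega
  by_cases hhigh : k + 2 * s ≤ j
  · refine ⟨(⟨1 - i, by omega⟩, ⟨j - (k + 2 * s), by omega⟩), ?_, ?_⟩
    · simp only [tGraph_two_adj_iff, Fin.ext_iff, ne_eq]; omega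
    · simp only [rootDist]; split_ifs <;> omega
  · refine absurd ?_ hx
    simp only [componentLabel, componentRoot]
    split_ifs <;> simp only [Prod.mk.injEq, Fin.ext_iff, true_and] <;> omega

theorem reachable_componentRoot (hs : 0 < s) (x : Fin 2 × Fin (2 * k + 2 * s + 1)) :
    (Γ).Reachable x (componentRoot k s (componentLabel k s x)) := by
  obtain ⟨y, hy, hxy⟩ := SimpleGraph.exists_reachable_of_forall_exists_adj_lt
    (P := fun y => y = componentRoot k s (componentLabel k s y)) (rootDist k s)
    (exists_adj_rootDist_lt k s hs) x
  rwa [hxy.eq_of_forall_adj fun _ _ => componentLabel_eq_of_adj k s hs, ← hy]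

theorem card_connectedComponent_two (hs : 0 < s) : Fintype.card (Γ).ConnectedComponent = 4 * s := by
  rw [Fintype.card_congr (SimpleGraph.ConnectedComponent.equivOfSection (componentLabel k s)
    (fun _ _ => componentLabel_eq_of_adj k s hs) (componentRoot k s)
    (componentLabel_componentRoot k s) (reachable_componentRoot k s hs))]
  simp only [Fintype.card_sum, Fintype.card_prod, Fintype.card_fin]
  omega

end tGraph

theorem dihedral_tGraph_components_of_odd_n_general (n s t : ℕ) (hnodd : Odd n)
    (hs : 1 ≤ s) (hsub : s ≤ (n - 1) / 2) (ht : t = (n + 1) / 2 + s) :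
    Fintype.card (tGraph 2 n t).ConnectedComponent = 4 * s := by
  obtain ⟨m, hm⟩ := hnodd
  obtain ⟨k, rfl, rfl⟩ : ∃ k, n = 2 * k + 2 * s + 1 ∧ t = k + 2 * s + 1 :=
    ⟨m - s, by omega, by omega⟩
  exact tGraph.card_connectedComponent_two k s hs

/-- For odd `n ≥ 3` and `t = (n+1)/2 + s` with `1 ≤ s ≤ (n-1)/2`, the `t`-graph `Γ(2,n,t)`
of the dihedral group `D_n` has exactly `4s` connected components. -/
theorem dihedral_tGraph_components_of_odd_n (n s t : ℕ) (hn : 3 ≤ n) (hnodd : Odd n)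
    (hs : 1 ≤ s) (hsub : s ≤ (n - 1) / 2) (ht : t = (n + 1) / 2 + s) :
    Fintype.card (tGraph 2 n t).ConnectedComponent = 4 * s :=
  dihedral_tGraph_components_of_odd_n_general n s t hnodd hs hsub ht
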